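/- Let X¹, …, X^N be i.i.d. ℝ^d-valued random vectors with joint density f(x) = ∏_{k=1}^d f_k(x_k), f_k > 0 almost everywhere, g: ℝ^d → ℝ measurable, and f̃ a probability density on ℝ with square-integrable likelihood ratio on the failure region. Let p̂_f = (1/N) Σ_k 1_{g(X^k) ≤ 0} and p̂_{iδ} = (1/N) Σ_k 1_{g(X^k) ≤ 0} f̃(X^k_i)/f_i(X^k_i) be computed from the same sample. Then Cov(p̂_f, p̂_{iδ}) = (1/N) p_{iδ} (1 − p_f). -/

import Mathlib

/-! With `S = {g ≤ 0}`, `A = 1_S` and `B = 1_S · f̃(x_i) / f_i(x_i)`, the estimators are the sample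
means of `A` and `B`. For an i.i.d. sample, `E[A(Xᵏ) B(Xˡ)]` is `E[A] E[B]` off the diagonal by
independence and `E[A B]` on it, so their covariance is `(1/N) (E[A B] - E[A] E[B])`. Now `A B = B`,
`E[A] = p_f`, and the likelihood ratio cancels the factor `f_i` of the product density, so that
`E[B] = p_{iδ}`. -/

open MeasureTheory ProbabilityTheory

section IIDSample

variable {Ω E ι : Type*} [MeasurableSpace Ω] [MeasurableSpace E]
  {P : Measure Ω} {μ : Measure E} {X : ι → Ω → E} {A B : E → ℝ}

theorem integrable_comp_of_map_eq {Y : Ω → E} (hY : Measurable Y) (hlaw : P.map Y = μ)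
    (hA : Integrable A μ) : Integrable (fun ω => A (Y ω)) P :=
  (hlaw ▸ hA).comp_measurable hY

theorem integral_comp_of_map_eq {Y : Ω → E} (hY : Measurable Y) (hlaw : P.map Y = μ)
    (hA : Measurable A) : ∫ ω, A (Y ω) ∂P = ∫ x, A x ∂μ := by
  rw [← hlaw, integral_map hY.aemeasurable hA.aestronglyMeasurable]

theorem integrable_comp_mul_comp (hiid : iIndepFun X P) (hX : ∀ k, Measurable (X k))
    (hlaw : ∀ k, P.map (X k) = μ) (hA : Measurable A) (hB : Measurable B)
    (hAi : Integrable A μ) (hBi : Integrable B μ) (hABi : Integrable (fun x => A x * B x) μ)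
    (k l : ι) : Integrable (fun ω => A (X k ω) * B (X l ω)) P := by
  obtain rfl | hkl := eq_or_ne k l
  · exact integrable_comp_of_map_eq (Y := X k) (hX k) (hlaw k) hABi
  · exact ((hiid.indepFun hkl).comp hA hB).integrable_mul
      (integrable_comp_of_map_eq (Y := X k) (hX k) (hlaw k) hAi)
      (integrable_comp_of_map_eq (Y := X l) (hX l) (hlaw l) hBi)

theorem integral_comp_mul_comp [DecidableEq ι] (hiid : iIndepFun X P)
    (hX : ∀ k, Measurable (X k)) (hlaw : ∀ k, P.map (X k) = μ)
    (hA : Measurable A) (hB : Measurable B) (k l : ι) :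
    ∫ ω, A (X k ω) * B (X l ω) ∂P =
      if k = l then ∫ x, A x * B x ∂μ else (∫ x, A x ∂μ) * ∫ x, B x ∂μ := by
  obtain rfl | hkl := eq_or_ne k l
  · rw [if_pos rfl]
    exact integral_comp_of_map_eq (Y := X k) (hX k) (hlaw k) (hA.mul hB)
  · rw [if_neg hkl, ← integral_comp_of_map_eq (hX k) (hlaw k) hA,
      ← integral_comp_of_map_eq (hX l) (hlaw l) hB]
    exact ((hiid.indepFun hkl).comp hA hB).integral_mul_eq_mul_integral
      (hA.comp (hX k)).aestronglyMeasurable (hB.comp (hX l)).aestronglyMeasurable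

theorem integral_sum_mul_sum_sub [Fintype ι] (hiid : iIndepFun X P)
    (hX : ∀ k, Measurable (X k)) (hlaw : ∀ k, P.map (X k) = μ)
    (hA : Measurable A) (hB : Measurable B)
    (hAi : Integrable A μ) (hBi : Integrable B μ) (hABi : Integrable (fun x => A x * B x) μ) :
    (∫ ω, (∑ k, A (X k ω)) * ∑ k, B (X k ω) ∂P) -
        (∫ ω, ∑ k, A (X k ω) ∂P) * ∫ ω, ∑ k, B (X k ω) ∂P =
      Fintype.card ι * (∫ x, A x * B x ∂μ - (∫ x, A x ∂μ) * ∫ x, B x ∂μ) := by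
  classical
  have hABk := integrable_comp_mul_comp hiid hX hlaw hA hB hAi hBi hABi
  simp_rw [Finset.sum_mul_sum]
  rw [integral_finsetSum _ fun k _ => integrable_finsetSum _ fun l _ => hABk k l,
    integral_finsetSum _ fun k _ => integrable_comp_of_map_eq (Y := X k) (hX k) (hlaw k) hAi,
    integral_finsetSum _ fun k _ => integrable_comp_of_map_eq (Y := X k) (hX k) (hlaw k) hBi]
  simp_rw [integral_finsetSum _ fun l _ => hABk _ l, integral_comp_mul_comp hiid hX hlaw hA hB,
    integral_comp_of_map_eq (hX _) (hlaw _) hA, integral_comp_of_map_eq (hX _) (hlaw _) hB]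
  set a := ∫ x, A x * B x ∂μ
  set b := (∫ x, A x ∂μ) * ∫ x, B x ∂μ
  have hsplit : ∀ k l : ι, (if k = l then a else b) = b + if k = l then a - b else 0 := by
    intro k l; split_ifs <;> ring
  simp only [hsplit, Finset.sum_add_distrib, Finset.sum_ite_eq, Finset.mem_univ, if_true,
    Finset.sum_const, Finset.card_univ, nsmul_eq_mul]
  ring

theorem integral_const_mul_sum_mul_sub [Fintype ι] (hiid : iIndepFun X P)
    (hX : ∀ k, Measurable (X k)) (hlaw : ∀ k, P.map (X k) = μ)
    (hA : Measurable A) (hB : Measurable B)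
    (hAi : Integrable A μ) (hBi : Integrable B μ) (hABi : Integrable (fun x => A x * B x) μ)
    (c : ℝ) :
    (∫ ω, (c * ∑ k, A (X k ω)) * (c * ∑ k, B (X k ω)) ∂P) -
        (∫ ω, c * ∑ k, A (X k ω) ∂P) * ∫ ω, c * ∑ k, B (X k ω) ∂P =
      c ^ 2 * Fintype.card ι * (∫ x, A x * B x ∂μ - (∫ x, A x ∂μ) * ∫ x, B x ∂μ) := by
  simp_rw [mul_mul_mul_comm c, integral_const_mul]
  rw [mul_assoc (c ^ 2), ← integral_sum_mul_sum_sub hiid hX hlaw hA hB hAi hBi hABi]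
  ring

end IIDSample

section Density

variable {α : Type*} [MeasurableSpace α] {μ : Measure α} {w : α → ℝ}

theorem integral_withDensity_ofReal (hw : Measurable w) (hw0 : 0 ≤ᵐ[μ] w) (h : α → ℝ) :
    ∫ x, h x ∂μ.withDensity (fun x => ENNReal.ofReal (w x)) = ∫ x, w x * h x ∂μ := by
  rw [integral_withDensity_eq_integral_toReal_smul hw.ennreal_ofReal
    (.of_forall fun _ => ENNReal.ofReal_lt_top)]
  refine integral_congr_ae ?_
  filter_upwards [hw0] with x hx
  rw [ENNReal.toReal_ofReal hx, smul_eq_mul]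

theorem integrable_withDensity_ofReal_iff (hw : Measurable w) (hw0 : 0 ≤ᵐ[μ] w) {h : α → ℝ} :
    Integrable h (μ.withDensity fun x => ENNReal.ofReal (w x)) ↔
      Integrable (fun x => w x * h x) μ := by
  rw [integrable_withDensity_iff_integrable_smul' hw.ennreal_ofReal
    (.of_forall fun _ => ENNReal.ofReal_lt_top)]
  refine integrable_congr ?_
  filter_upwards [hw0] with x hx
  rw [ENNReal.toReal_ofReal hx, smul_eq_mul]

theorem integral_indicator_one_withDensity_ofReal (hw : Measurable w) (hw0 : 0 ≤ᵐ[μ] w)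
    (S : Set α) :
    ∫ x, S.indicator (fun _ => (1 : ℝ)) x ∂μ.withDensity (fun x => ENNReal.ofReal (w x)) =
      ∫ x, S.indicator w x ∂μ := by
  simp_rw [integral_withDensity_ofReal hw hw0, ← Set.indicator_mul_right, mul_one]

theorem integrable_withDensity_ofReal_of_sq
    [IsFiniteMeasure (μ.withDensity fun x => ENNReal.ofReal (w x))] (hw : Measurable w)
    (hw0 : 0 ≤ᵐ[μ] w) {h : α → ℝ} (hh : Measurable h)
    (hsq : Integrable (fun x => w x * h x ^ 2) μ) :
    Integrable h (μ.withDensity fun x => ENNReal.ofReal (w x)) :=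
  ((memLp_two_iff_integrable_sq hh.aestronglyMeasurable).2
    ((integrable_withDensity_ofReal_iff hw hw0).2 hsq)).integrable one_le_two

end Density

theorem Finset.prod_mul_div_eq_mul_prod_erase {ι K : Type*} [DecidableEq ι] [Field K]
    {s : Finset ι} {a : ι → K} {i : ι} (hi : i ∈ s) (hai : a i ≠ 0) (b : K) :
    (∏ j ∈ s, a j) * (b / a i) = b * ∏ j ∈ s.erase i, a j := by
  rw [← Finset.mul_prod_erase s a hi]
  field_simp

section ProductDensity

variable {d : ℕ} {f : Fin d → ℝ → ℝ}

theorem measurable_prod_comp_apply (hf : ∀ k, Measurable (f k)) :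
    Measurable fun x : Fin d → ℝ => ∏ j, f j (x j) :=
  Finset.measurable_prod _ fun j _ => (hf j).comp (measurable_pi_apply j)

theorem integral_indicator_likelihoodRatio (hf : ∀ k, Measurable (f k)) (hf0 : ∀ k x, 0 ≤ f k x)
    {i : Fin d} (hpos : ∀ᵐ t : ℝ, f i t ≠ 0) (ftilde : ℝ → ℝ) (S : Set (Fin d → ℝ)) :
    ∫ x, S.indicator (fun y => ftilde (y i) / f i (y i)) x
        ∂(Measure.pi fun _ => (volume : Measure ℝ)).withDensity
          (fun x => ENNReal.ofReal (∏ j, f j (x j))) =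
      ∫ x, S.indicator (fun y => ftilde (y i) * ∏ j ∈ Finset.univ.erase i, f j (y j)) x
        ∂(Measure.pi fun _ => (volume : Measure ℝ)) := by
  classical
  rw [integral_withDensity_ofReal (measurable_prod_comp_apply hf)
    (.of_forall fun x => Finset.prod_nonneg fun j _ => hf0 j (x j))]
  refine integral_congr_ae ?_
  filter_upwards [Measure.tendsto_eval_ae_ae.eventually hpos] with x hx
  by_cases hxS : x ∈ S
  · simp only [Set.indicator_of_mem hxS]
    exact Finset.prod_mul_div_eq_mul_prod_erase (Finset.mem_univ i) hx _
  · simp only [Set.indicator_of_notMem hxS, mul_zero]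

end ProductDensity

theorem stmt16_general {Ω : Type*} [MeasurableSpace Ω] (P : Measure Ω) [IsProbabilityMeasure P]
    (d N : ℕ) (hN : 0 < N) (i : Fin d) (f : Fin d → ℝ → ℝ) (ftilde : ℝ → ℝ)
    (hf_meas : ∀ k, Measurable (f k)) (hf_nonneg : ∀ k x, 0 ≤ f k x)
    (hft_meas : Measurable ftilde)
    (hpos : ∀ᵐ x : ℝ, 0 < f i x)
    (g : (Fin d → ℝ) → ℝ) (hg : Measurable g)
    (X : Fin N → Ω → (Fin d → ℝ)) (hX : ∀ k, Measurable (X k))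
    (hiid : iIndepFun X P)
    (hlaw : ∀ k, Measure.map (X k) P =
      (Measure.pi fun _ => (volume : Measure ℝ)).withDensity
        (fun x => ENNReal.ofReal (∏ j, f j (x j))))
    (hsq : Integrable
      (fun x => Set.indicator {y | g y ≤ 0}
          (fun y => (ftilde (y i) / f i (y i)) ^ 2 * ∏ j, f j (y j)) x)
      (Measure.pi fun _ => (volume : Measure ℝ))) :
    (∫ ω, ((1 / (N : ℝ)) * ∑ k, Set.indicator {y | g y ≤ 0} (fun _ => (1 : ℝ)) (X k ω)) *
        ((1 / (N : ℝ)) * ∑ k, Set.indicator {y | g y ≤ 0}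
          (fun y => ftilde (y i) / f i (y i)) (X k ω)) ∂P) -
      (∫ ω, (1 / (N : ℝ)) * ∑ k,
          Set.indicator {y | g y ≤ 0} (fun _ => (1 : ℝ)) (X k ω) ∂P) *
        (∫ ω, (1 / (N : ℝ)) * ∑ k, Set.indicator {y | g y ≤ 0}
          (fun y => ftilde (y i) / f i (y i)) (X k ω) ∂P) =
    (1 / (N : ℝ)) *
      (∫ x, Set.indicator {y | g y ≤ 0}
          (fun y => ftilde (y i) * ∏ j ∈ Finset.univ.erase i, f j (y j)) x
          ∂(Measure.pi fun _ => (volume : Measure ℝ))) *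
      (1 - ∫ x, Set.indicator {y | g y ≤ 0} (fun y => ∏ j, f j (y j)) x
          ∂(Measure.pi fun _ => (volume : Measure ℝ))) := by
  classical
  set π := Measure.pi fun _ : Fin d => (volume : Measure ℝ)
  set w : (Fin d → ℝ) → ℝ := fun x => ∏ j, f j (x j)
  set S := {y : Fin d → ℝ | g y ≤ 0}
  set r : (Fin d → ℝ) → ℝ := fun y => ftilde (y i) / f i (y i)
  have hw : Measurable w := measurable_prod_comp_apply hf_meas
  have hw0 : 0 ≤ᵐ[π] w := .of_forall fun x => Finset.prod_nonneg fun j _ => hf_nonneg j (x j)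
  have hS : MeasurableSet S := measurableSet_le hg measurable_const
  have hB : Measurable (S.indicator r) :=
    ((hft_meas.comp (measurable_pi_apply i)).div
      ((hf_meas i).comp (measurable_pi_apply i))).indicator hS
  have : IsProbabilityMeasure (π.withDensity fun x => ENNReal.ofReal (w x)) :=
    hlaw ⟨0, hN⟩ ▸ Measure.isProbabilityMeasure_map (hX _).aemeasurable
  have hAB : ∀ x, S.indicator (fun _ => (1 : ℝ)) x * S.indicator r x = S.indicator r x := by
    intro x; by_cases hx : x ∈ S <;> simp [hx]
  have hBi : Integrable (S.indicator r) (π.withDensity fun x => ENNReal.ofReal (w x)) := by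
    refine integrable_withDensity_ofReal_of_sq hw hw0 hB (hsq.congr (.of_forall fun x => ?_))
    by_cases hx : x ∈ S <;> simp [hx, r, w, mul_comm]
  rw [integral_const_mul_sum_mul_sub hiid hX hlaw (measurable_const.indicator hS) hB
      ((integrable_const 1).indicator hS) hBi (by simpa only [hAB] using hBi),
    Fintype.card_fin]
  simp_rw [hAB]
  rw [integral_indicator_one_withDensity_ofReal hw hw0,
    integral_indicator_likelihoodRatio hf_meas hf_nonneg (hpos.mono fun _ h => h.ne')]
  have hN' : (N : ℝ) ≠ 0 := Nat.cast_ne_zero.mpr hN.ne'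
  field_simp
  ring

/-- Let `X¹, …, X^N` be i.i.d. random vectors on `ℝ^d` with joint density
`f(x) = ∏_k f_k(x_k)`, `f_k > 0` a.e., `g : ℝ^d → ℝ` measurable, and `f̃` a probability
density on `ℝ` with square-integrable likelihood ratio on the failure region.  Let
`p̂_f = (1/N) Σ_k 1_{g(X^k) ≤ 0}` and
`p̂_{iδ} = (1/N) Σ_k 1_{g(X^k) ≤ 0} f̃(X^k_i)/f_i(X^k_i)` be computed from the same
sample.  Then `Cov(p̂_f, p̂_{iδ}) = E[p̂_f p̂_{iδ}] − E[p̂_f] E[p̂_{iδ}] = (1/N) p_{iδ} (1 − p_f)`. -/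
theorem stmt16 {Ω : Type*} [MeasurableSpace Ω] (P : Measure Ω) [IsProbabilityMeasure P]
    (d N : ℕ) (hN : 0 < N) (i : Fin d) (f : Fin d → ℝ → ℝ) (ftilde : ℝ → ℝ)
    (hf_meas : ∀ k, Measurable (f k)) (hf_nonneg : ∀ k x, 0 ≤ f k x)
    (hf_int : ∀ k, ∫ x : ℝ, f k x = 1)
    (hft_meas : Measurable ftilde) (hft_nonneg : ∀ x, 0 ≤ ftilde x)
    (hft_int : ∫ x : ℝ, ftilde x = 1)
    (hpos : ∀ᵐ x : ℝ, 0 < f i x)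
    (g : (Fin d → ℝ) → ℝ) (hg : Measurable g)
    (X : Fin N → Ω → (Fin d → ℝ)) (hX : ∀ k, Measurable (X k))
    (hiid : iIndepFun X P)
    (hlaw : ∀ k, Measure.map (X k) P =
      (Measure.pi fun _ => (volume : Measure ℝ)).withDensity
        (fun x => ENNReal.ofReal (∏ j, f j (x j))))
    (hsq : Integrable
      (fun x => Set.indicator {y | g y ≤ 0}
          (fun y => (ftilde (y i) / f i (y i)) ^ 2 * ∏ j, f j (y j)) x)
      (Measure.pi fun _ => (volume : Measure ℝ))) :
    (∫ ω, ((1 / (N : ℝ)) * ∑ k, Set.indicator {y | g y ≤ 0} (fun _ => (1 : ℝ)) (X k ω)) *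
        ((1 / (N : ℝ)) * ∑ k, Set.indicator {y | g y ≤ 0}
          (fun y => ftilde (y i) / f i (y i)) (X k ω)) ∂P) -
      (∫ ω, (1 / (N : ℝ)) * ∑ k,
          Set.indicator {y | g y ≤ 0} (fun _ => (1 : ℝ)) (X k ω) ∂P) *
        (∫ ω, (1 / (N : ℝ)) * ∑ k, Set.indicator {y | g y ≤ 0}
          (fun y => ftilde (y i) / f i (y i)) (X k ω) ∂P) =
    (1 / (N : ℝ)) *
      (∫ x, Set.indicator {y | g y ≤ 0}
          (fun y => ftilde (y i) * ∏ j ∈ Finset.univ.erase i, f j (y j)) x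
          ∂(Measure.pi fun _ => (volume : Measure ℝ))) *
      (1 - ∫ x, Set.indicator {y | g y ≤ 0} (fun y => ∏ j, f j (y j)) x
          ∂(Measure.pi fun _ => (volume : Measure ℝ))) :=
  stmt16_general P d N hN i f ftilde hf_meas hf_nonneg hft_meas hpos g hg X hX hiid hlaw hsq
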